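/- arXiv:1608.06117 — 12 statements merged into one kernel-verified Lean document; each statement's English description precedes it below -/
import Mathlib

section
/- Let A = (a_1,...,a_m)^T ∈ R^{m×d} and b ∈ R^m. The map M_{A,b}(x) = (|⟨a_j,x⟩+b_j|)_{j=1}^m is injective on R^d if and only if for all u,v ∈ R^d with u ≠ 0, there exists k ∈ {1,...,m} such that ⟨a_k,u⟩(⟨a_k,v⟩+b_k) ≠ 0. -/
/-!
Two points `x ≠ y` are exactly the points `v ± u/2` with `u = x - y ≠ 0` and `v` their midpoint,
and `|s| = |t|` iff `(s - t)(s + t) = 0`. For `s, t = ⟪a_k, v ± u/2⟫ + b_k` this product is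
`2 ⟪a_k, u⟫ (⟪a_k, v⟫ + b_k)`, so `x` and `y` have the same image iff every such product vanishes.
-/

open RealInnerProductSpace

theorem Function.injective_iff_forall_apply_add_half_ne_apply_sub_half {E F : Type*}
    [AddCommGroup E] [Module ℝ E] (f : E → F) :
    Function.Injective f ↔
      ∀ u v : E, u ≠ 0 → f (v + (2 : ℝ)⁻¹ • u) ≠ f (v - (2 : ℝ)⁻¹ • u) := by
  constructor
  · intro hf u v hu hfuv
    apply hu
    have hsum : u = (v + (2 : ℝ)⁻¹ • u) - (v - (2 : ℝ)⁻¹ • u) := by module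
    rw [hsum, hf hfuv, sub_self]
  · intro h x y hxy
    by_contra hne
    refine h (x - y) ((2 : ℝ)⁻¹ • (x + y)) (sub_ne_zero.mpr hne) ?_
    convert hxy using 2 <;> module

theorem abs_inner_add_half_eq_abs_inner_sub_half_iff {E : Type*}
    [NormedAddCommGroup E] [InnerProductSpace ℝ E] (a u v : E) (c : ℝ) :
    |⟪a, v + (2 : ℝ)⁻¹ • u⟫ + c| = |⟪a, v - (2 : ℝ)⁻¹ • u⟫ + c| ↔ ⟪a, u⟫ * (⟪a, v⟫ + c) = 0 := by
  rw [inner_add_right, inner_sub_right, real_inner_smul_right, abs_eq_abs, ← sub_eq_zero,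
    ← add_eq_zero_iff_eq_neg, ← mul_eq_zero]
  constructor <;> intro h
  · linear_combination (2 : ℝ)⁻¹ * h
  · linear_combination 2 * h

theorem stmt_1 (m d : ℕ) (A : Fin m → EuclideanSpace ℝ (Fin d)) (b : Fin m → ℝ) :
    Function.Injective (fun x : EuclideanSpace ℝ (Fin d) => fun j : Fin m => abs ((inner ℝ (A j) (x) : ℝ) + b j)) ↔
    ∀ u v : EuclideanSpace ℝ (Fin d), u ≠ 0 →
      ∃ k : Fin m, (inner ℝ (A k) (u) : ℝ) * ((inner ℝ (A k) (v) : ℝ) + b k) ≠ 0 := by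
  rw [Function.injective_iff_forall_apply_add_half_ne_apply_sub_half]
  refine forall₂_congr fun u v => imp_congr_right fun _ => ?_
  simp only [Ne, funext_iff, abs_inner_add_half_eq_abs_inner_sub_half_iff, not_forall]
end

section
/- Let A = (a_1,...,a_m)^T ∈ R^{m×d} and b ∈ R^m. Then (A,b) is affine phase retrievable for R^d if and only if for every subset S ⊆ {1,...,m} such that b_S lies in the column span of A_S, the vectors {a_j : j ∈ S^c} span R^d. Here A_S denotes the submatrix of A with rows indexed by S and b_S the corresponding subvector of b. -/
/-!
If `|⟪a_j, x⟫ + b_j| = |⟪a_j, y⟫ + b_j|` for all `j`, let `S` be the set of indices where the two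
signs disagree. On `S` the midpoint `-(x + y) / 2` solves `⟪a_j, v⟫ = b_j`, and off `S` the
difference `x - y` is orthogonal to `a_j`; so the span condition forces `x = y`. Conversely, if
`⟪a_j, v⟫ = b_j` on `S` and `u ≠ 0` is orthogonal to every `a_j` with `j ∉ S`, then `u - v` and
`-u - v` have the same measurements.
-/

open Submodule
open scoped InnerProductSpace

section Span

variable {𝕜 E : Type*} [RCLike 𝕜] [NormedAddCommGroup E] [InnerProductSpace 𝕜 E]

theorem Submodule.mem_orthogonal_span_iff {s : Set E} {u : E} :
    u ∈ (span 𝕜 s)ᗮ ↔ ∀ a ∈ s, ⟪a, u⟫_𝕜 = 0 := by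
  simp_rw [mem_orthogonal', ← inner_eq_zero_symm (x := u)]
  exact span_le (p := LinearMap.ker (innerₛₗ 𝕜 u))

theorem Submodule.span_eq_top_iff_forall_inner_eq_zero [FiniteDimensional 𝕜 E] {s : Set E} :
    span 𝕜 s = ⊤ ↔ ∀ u, (∀ a ∈ s, ⟪a, u⟫_𝕜 = 0) → u = 0 := by
  simp_rw [← orthogonal_eq_bot_iff, Submodule.eq_bot_iff, mem_orthogonal_span_iff]

end Span

section AffinePhaseRetrieval

variable {ι E : Type*} [NormedAddCommGroup E] [InnerProductSpace ℝ E] {A : ι → E} {b : ι → ℝ}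

theorem abs_inner_sub_add_eq_abs_inner_neg_sub_add {S : Set ι} {u v : E}
    (hv : ∀ j ∈ S, b j = ⟪A j, v⟫_ℝ) (hu : ∀ j ∉ S, ⟪A j, u⟫_ℝ = 0) (j : ι) :
    |⟪A j, u - v⟫_ℝ + b j| = |⟪A j, -u - v⟫_ℝ + b j| := by
  simp only [inner_sub_right, inner_neg_right]
  by_cases hj : j ∈ S
  · rw [hv j hj, ← abs_neg]
    ring_nf
  · rw [hu j hj]
    ring_nf

theorem injective_abs_inner_add_iff :
    Function.Injective (fun x : E => fun j => |⟪A j, x⟫_ℝ + b j|) ↔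
      ∀ S : Set ι, (∃ v, ∀ j ∈ S, b j = ⟪A j, v⟫_ℝ) → ∀ u, (∀ j ∉ S, ⟪A j, u⟫_ℝ = 0) → u = 0 := by
  constructor
  · rintro hinj S ⟨v, hv⟩ u hu
    have hreflect : u - v = -u - v :=
      hinj (funext (abs_inner_sub_add_eq_abs_inner_neg_sub_add hv hu))
    have : IsAddTorsionFree E := .of_isTorsionFree ℝ E
    exact self_eq_neg.mp (sub_left_inj.mp hreflect)
  · intro h x y hxy
    set S : Set ι := {j | ⟪A j, x⟫_ℝ + b j = -(⟪A j, y⟫_ℝ + b j)}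
    have hS : ∀ j ∈ S, b j = ⟪A j, -((2 : ℝ)⁻¹ • (x + y))⟫_ℝ := by
      intro j (hj : _ = _)
      rw [inner_neg_right, real_inner_smul_right, inner_add_right]
      linarith
    have hSc : ∀ j ∉ S, ⟪A j, x - y⟫_ℝ = 0 := by
      intro j hj
      have := (abs_eq_abs.mp (congrFun hxy j)).resolve_right hj
      rw [inner_sub_right]
      linarith
    exact sub_eq_zero.mp (h S ⟨_, hS⟩ _ hSc)

end AffinePhaseRetrieval

theorem stmt_2 (m d : ℕ) (A : Fin m → EuclideanSpace ℝ (Fin d)) (b : Fin m → ℝ) :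
    Function.Injective (fun x : EuclideanSpace ℝ (Fin d) => fun j : Fin m => abs ((inner ℝ (A j) (x) : ℝ) + b j)) ↔
    ∀ S : Finset (Fin m),
      (∃ v : EuclideanSpace ℝ (Fin d), ∀ j ∈ S, b j = (inner ℝ (A j) (v) : ℝ)) →
      Submodule.span ℝ {a : EuclideanSpace ℝ (Fin d) | ∃ j ∉ S, a = A j} = ⊤ := by
  classical
  have hspan (S : Finset (Fin m)) : span ℝ {a | ∃ j ∉ S, a = A j} = ⊤ ↔
      ∀ u, (∀ j ∉ S, ⟪A j, u⟫_ℝ = 0) → u = 0 := by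
    rw [span_eq_top_iff_forall_inner_eq_zero]
    aesop
  simp only [hspan, injective_abs_inner_add_iff]
  exact ⟨fun h S => h S, fun h S => by simpa using h S.toFinset⟩
end

section
/- Let A ∈ R^{m×d} and b ∈ R^m. If m ≤ 2d-1, then (A,b) is not affine phase retrievable for R^d; that is, the map x ↦ (|⟨a_j,x⟩+b_j|)_{j=1}^m is not injective on R^d. -/
/-!
Choose indices `S` such that the `a_j`, `j ∈ S`, form a basis of the span of all the `a_j`, and
`u` with `⟪a_j, u⟫ + b_j = 0` for `j ∈ S`. The remaining vectors span a space of dimension at most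
`min (|S|, m - |S|) < d`, so some `v ≠ 0` is orthogonal to all of them. Then `u + v` and `u - v`
have the same measurements: for `j ∈ S` they are `|±⟪a_j, v⟫|`, for `j ∉ S` both are `|⟪a_j, u⟫ + b_j|`.
-/

open Module Submodule Set
open scoped InnerProductSpace

variable {E : Type*} [NormedAddCommGroup E] [InnerProductSpace ℝ E]

theorem exists_inner_eq_of_linearIndependent {κ : Type*} [Finite κ] {a : κ → E}
    (ha : LinearIndependent ℝ a) (c : κ → ℝ) : ∃ u : E, ∀ k, ⟪a k, u⟫_ℝ = c k := by
  let K := span ℝ (range a)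
  have : FiniteDimensional ℝ K := FiniteDimensional.span_of_finite ℝ (finite_range a)
  let f : K →ₗ[ℝ] ℝ := (Basis.span ha).constr ℝ c
  let u : K := (InnerProductSpace.toDual ℝ K).symm (LinearMap.toContinuousLinearMap f)
  refine ⟨u, fun k => ?_⟩
  calc ⟪a k, u⟫_ℝ = ⟪u, Basis.span ha k⟫_ℝ := by
        rw [real_inner_comm, Basis.span_apply, Submodule.coe_inner]
    _ = f (Basis.span ha k) := InnerProductSpace.toDual_symm_apply
    _ = c k := Basis.constr_basis _ _ _ _

theorem abs_inner_add_eq_abs_inner_sub {ι : Type*} (a : ι → E) (b : ι → ℝ) (S : Set ι) {u v : E}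
    (hu : ∀ j ∈ S, ⟪a j, u⟫_ℝ + b j = 0) (hv : ∀ j ∉ S, ⟪a j, v⟫_ℝ = 0) (j : ι) :
    |⟪a j, u + v⟫_ℝ + b j| = |⟪a j, u - v⟫_ℝ + b j| := by
  rw [inner_add_right, inner_sub_right]
  by_cases hj : j ∈ S
  · rw [show ⟪a j, u⟫_ℝ + ⟪a j, v⟫_ℝ + b j = ⟪a j, v⟫_ℝ by linarith [hu j hj],
      show ⟪a j, u⟫_ℝ - ⟪a j, v⟫_ℝ + b j = -⟪a j, v⟫_ℝ by linarith [hu j hj], abs_neg]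
  · rw [hv j hj, add_zero, sub_zero]

theorem finrank_span_image_compl_lt {ι : Type*} [Fintype ι] [FiniteDimensional ℝ E]
    {a : ι → E} {S : Set ι} (hli : LinearIndepOn ℝ a S) (hspan : range a ⊆ span ℝ (a '' S))
    (hcard : Fintype.card ι < 2 * finrank ℝ E) : finrank ℝ (span ℝ (a '' Sᶜ)) < finrank ℝ E := by
  classical
  have h_compl : finrank ℝ (span ℝ (a '' Sᶜ)) ≤ Fintype.card ↥Sᶜ := by
    rw [image_eq_range]
    exact finrank_range_le_card _
  have h_S : finrank ℝ (span ℝ (a '' S)) = Fintype.card S := by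
    rw [image_eq_range]
    exact finrank_span_eq_card hli
  have h_le : finrank ℝ (span ℝ (a '' Sᶜ)) ≤ finrank ℝ (span ℝ (a '' S)) :=
    Submodule.finrank_mono (span_le.mpr ((image_subset_range a _).trans hspan))
  have h_card_compl := Fintype.card_compl_set S
  have h_card_le := set_fintype_card_le_univ S
  omega

theorem exists_ne_zero_forall_inner_eq_zero_of_finrank_lt {𝕜 F : Type*} [RCLike 𝕜]
    [NormedAddCommGroup F] [InnerProductSpace 𝕜 F] [FiniteDimensional 𝕜 F] {s : Set F}
    (hs : finrank 𝕜 (span 𝕜 s) < finrank 𝕜 F) : ∃ v ≠ (0 : F), ∀ w ∈ s, ⟪w, v⟫_𝕜 = 0 := by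
  have hW : span 𝕜 s ≠ ⊤ := fun h => by rw [h, finrank_top] at hs; exact lt_irrefl _ hs
  obtain ⟨v, hv, hv0⟩ := exists_mem_ne_zero_of_ne_bot (mt orthogonal_eq_bot_iff.mp hW)
  exact ⟨v, hv0, fun w hw => (mem_orthogonal _ _).mp hv w (subset_span hw)⟩

theorem stmt_3 (m d : ℕ) (hm : m < 2 * d) (A : Fin m → EuclideanSpace ℝ (Fin d)) (b : Fin m → ℝ) :
    ¬ Function.Injective
      (fun x : EuclideanSpace ℝ (Fin d) => fun j : Fin m => abs ((inner ℝ (A j) (x) : ℝ) + b j)) := by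
  obtain ⟨S, -, -, hspan, hli⟩ :=
    exists_linearIndepOn_extension (linearIndepOn_empty ℝ A) (empty_subset univ)
  obtain ⟨u, hu⟩ := exists_inner_eq_of_linearIndependent hli (fun j => -b j)
  obtain ⟨v, hv0, hv⟩ := exists_ne_zero_forall_inner_eq_zero_of_finrank_lt
    (finrank_span_image_compl_lt hli (by rwa [image_univ] at hspan)
      (by rwa [Fintype.card_fin, finrank_euclideanSpace_fin]))
  intro hinj
  have huv : u + v = u - v := hinj <| funext <| abs_inner_add_eq_abs_inner_sub A b S
    (fun j hj => by rw [hu ⟨j, hj⟩]; ring) (fun j hj => hv _ ⟨j, hj, rfl⟩)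
  exact hv0 (by linear_combination (norm := module) (2⁻¹ : ℝ) • huv)
end

section
/- Suppose A ∈ R^{m×d} with m ≥ 2d has the property that any d rows of A are linearly independent, and b ∈ R^m has the property that for every subset S ⊆ {1,...,m} with #S > d, b_S does not lie in the column span of A_S. Then (A,b) is affine phase retrievable for R^d. -/
/-!
If `|⟪a_j, x⟫ + b_j| = |⟪a_j, y⟫ + b_j|` for every `j`, then for each `j` either
`⟪a_j, x - y⟫ = 0` or `b_j = ⟪a_j, -(x + y) / 2⟫`. When `x ≠ y` the first alternative holds for
fewer than `d` indices, since any `d` of the `a_j` form a basis. Hence the second holds on a set of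
more than `m - d ≥ d` indices, on which `b` would then lie in the column span of `A`.
-/

open Finset Module RealInnerProductSpace

theorem eq_or_eq_neg_half_of_abs_add_eq_abs_add {K : Type*} [Field K] [LinearOrder K]
    [IsStrictOrderedRing K] {a a' c : K} (h : |a + c| = |a' + c|) :
    a = a' ∨ c = -(a + a') / 2 := by
  rcases abs_eq_abs.1 h with h | h
  · exact .inl (by linarith)
  · exact .inr (by linarith)

section

variable {E : Type*} [NormedAddCommGroup E] [InnerProductSpace ℝ E] [FiniteDimensional ℝ E]

theorem eq_zero_of_linearIndependent_of_inner_eq_zero {ι : Type*} [Fintype ι] {v : ι → E}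
    (hv : LinearIndependent ℝ v) (hcard : Fintype.card ι = finrank ℝ E) {w : E}
    (hw : ∀ i, ⟪v i, w⟫ = 0) : w = 0 :=
  InnerProductSpace.ext_inner_left_basis (basisOfLinearIndependentOfCardEqFinrank' v hv hcard)
    fun i => by simpa using hw i

theorem card_filter_inner_eq_zero_lt {ι : Type*} [Fintype ι] {A : ι → E}
    (hA : ∀ S : Finset ι, #S = finrank ℝ E → LinearIndependent ℝ (fun j : S => A j))
    {w : E} (hw : w ≠ 0) : #{j | ⟪A j, w⟫ = 0} < finrank ℝ E := by
  by_contra! hcard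
  obtain ⟨S, hS, hScard⟩ := exists_subset_card_eq hcard
  refine hw (eq_zero_of_linearIndependent_of_inner_eq_zero (hA S hScard)
    (by rw [Fintype.card_coe, hScard]) fun j => ?_)
  exact (mem_filter.1 (hS j.2)).2

theorem injective_abs_inner_add {ι : Type*} [Fintype ι] {A : ι → E} {b : ι → ℝ}
    (hcard : 2 * finrank ℝ E ≤ Fintype.card ι)
    (hA : ∀ S : Finset ι, #S = finrank ℝ E → LinearIndependent ℝ (fun j : S => A j))
    (hb : ∀ S : Finset ι, finrank ℝ E < #S → ¬ ∃ v : E, ∀ j ∈ S, b j = ⟪A j, v⟫) :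
    Function.Injective fun (x : E) (j : ι) => |⟪A j, x⟫ + b j| := by
  classical
  intro x y hxy
  by_contra hne
  set T : Finset ι := {j | ⟪A j, x - y⟫ = 0}
  have hT : #T < finrank ℝ E := card_filter_inner_eq_zero_lt hA (sub_ne_zero.2 hne)
  refine hb Tᶜ (by rw [card_compl]; omega) ⟨-(1 / 2 : ℝ) • (x + y), fun j hj => ?_⟩
  rcases eq_or_eq_neg_half_of_abs_add_eq_abs_add (congrFun hxy j) with h | h
  · exact absurd (mem_filter.2 ⟨mem_univ j, by rw [inner_sub_right, h, sub_self]⟩)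
      (mem_compl.1 hj)
  · rw [h, inner_smul_right, inner_add_right]
    ring

end

theorem stmt_4 (m d : ℕ) (hm : 2 * d ≤ m) (A : Fin m → EuclideanSpace ℝ (Fin d)) (b : Fin m → ℝ)
    (hA : ∀ S : Finset (Fin m), S.card = d →
      LinearIndependent ℝ (fun j : S => A j))
    (hb : ∀ S : Finset (Fin m), d < S.card →
      ¬ ∃ v : EuclideanSpace ℝ (Fin d), ∀ j ∈ S, b j = (inner ℝ (A j) (v) : ℝ)) :
    Function.Injective
      (fun x : EuclideanSpace ℝ (Fin d) => fun j : Fin m => abs ((inner ℝ (A j) (x) : ℝ) + b j)) := by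
  have hd : finrank ℝ (EuclideanSpace ℝ (Fin d)) = d := finrank_euclideanSpace_fin
  exact injective_abs_inner_add (by rwa [hd, Fintype.card_fin]) (by rwa [hd]) (by rwa [hd])
end

section
/- Let d ≥ 2 and m ≥ 2d. The set of pairs (A,b) ∈ R^{m×d} × R^m that are affine phase retrievable for R^d is not an open subset of R^{m×d} × R^m (with the Euclidean topology). -/
/-!
Repeat each standard basis vector `e_i` as a row with offset `0` and with offset `1` (further rows
repeat some `e_i` with offset `1`). This system is affine phase retrievable, since `|t|` and
`|t + 1|` together determine `t`. Tilting the offset-`0` copy of `e_q` to `e_q + ε e_p`, `ε ≠ 0`,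
destroys retrievability: `x = ε⁻¹ e_p - e_q / 2` and `y = ε⁻¹ e_p - 3 e_q / 2` have the same
measurements, because `x - y = e_q` is orthogonal to every row except the copies of `e_q`, and on
those `⟪a_j, x + y⟫ = -2 b_j`. The tilted systems converge to the untilted one as `ε → 0`.
-/

open Function Filter Topology

section General

variable {ι E : Type*} [NormedAddCommGroup E] [InnerProductSpace ℝ E]

def IsAffinePhaseRetrievable (a : ι → E) (b : ι → ℝ) : Prop :=
  Injective fun x : E => fun j => |inner ℝ (a j) x + b j|

theorem abs_add_eq_abs_add_iff {s t c : ℝ} : |s + c| = |t + c| ↔ s = t ∨ s + t + 2 * c = 0 := by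
  rw [abs_eq_abs]
  constructor <;> rintro (h | h)
  · exact .inl (by linarith)
  · exact .inr (by linarith)
  · exact .inl (by rw [h])
  · exact .inr (by linarith)

theorem eq_of_abs_add_eq_abs_add {s t c c' : ℝ} (h : |s + c| = |t + c|) (h' : |s + c'| = |t + c'|)
    (hc : c ≠ c') : s = t := by
  rcases abs_add_eq_abs_add_iff.1 h with h | h
  · exact h
  rcases abs_add_eq_abs_add_iff.1 h' with h' | h'
  · exact h'
  exact absurd (by linarith) hc

theorem isAffinePhaseRetrievable_of_basis {κ : Type*} {a : ι → E} {b : ι → ℝ}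
    (v : Module.Basis κ ℝ E) (hv : ∀ k, ∃ j j', a j = v k ∧ a j' = v k ∧ b j ≠ b j') : IsAffinePhaseRetrievable a b := by
  intro x y hxy
  refine InnerProductSpace.ext_inner_left_basis v fun k => ?_
  obtain ⟨j, j', hj, hj', hb⟩ := hv k
  have h := congrFun hxy j
  have h' := congrFun hxy j'
  simp only [hj, hj'] at h h'
  exact eq_of_abs_add_eq_abs_add h h' hb

theorem not_isAffinePhaseRetrievable {a : ι → E} {b : ι → ℝ} {x y : E} (hxy : x ≠ y)
    (h : ∀ j, inner ℝ (a j) (x - y) = 0 ∨ inner ℝ (a j) (x + y) + 2 * b j = 0) :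
    ¬ IsAffinePhaseRetrievable a b := fun hinj =>
  hxy <| hinj <| funext fun j => abs_add_eq_abs_add_iff.2 <| by
    simpa only [inner_sub_right, inner_add_right, sub_eq_zero, add_assoc] using h j

end General

theorem not_isOpen_of_continuousAt {X Y : Type*} [TopologicalSpace X] [TopologicalSpace Y]
    {S : Set X} {f : Y → X} {t : Y} [(𝓝[≠] t).NeBot] (hf : ContinuousAt f t) (ht : f t ∈ S)
    (hS : ∀ s ≠ t, f s ∉ S) : ¬ IsOpen S := fun hopen => by
  have hnear : ∀ᶠ s in 𝓝[≠] t, f s ∈ S :=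
    (hf.eventually_mem (hopen.mem_nhds ht)).filter_mono nhdsWithin_le_nhds
  obtain ⟨s, hs, hst⟩ := (hnear.and eventually_mem_nhdsWithin).exists
  exact hS s hst hs

section Coordinates

variable (m d : ℕ) [NeZero d]

noncomputable def doubledCoordinateRows : Fin m → EuclideanSpace ℝ (Fin d) :=
  fun j => EuclideanSpace.single (Fin.ofNat d j) 1

def doubledCoordinateOffsets : Fin m → ℝ :=
  fun j => if (j : ℕ) < d then 0 else 1

variable {m d}

theorem isAffinePhaseRetrievable_doubledCoordinate (hm : 2 * d ≤ m) :
    IsAffinePhaseRetrievable (doubledCoordinateRows m d) (doubledCoordinateOffsets m d) := by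
  refine isAffinePhaseRetrievable_of_basis (EuclideanSpace.basisFun (Fin d) ℝ).toBasis fun k => ?_
  have hrow : ∀ j : Fin m, (j : ℕ) % d = k →
      doubledCoordinateRows m d j = (EuclideanSpace.basisFun (Fin d) ℝ).toBasis k := fun j hj => by
    rw [OrthonormalBasis.coe_toBasis, EuclideanSpace.basisFun_apply, doubledCoordinateRows]
    exact congrArg (EuclideanSpace.single · 1) (Fin.ext (by rw [Fin.val_ofNat, hj]))
  refine ⟨⟨k, by omega⟩, ⟨d + k, by omega⟩, hrow _ (Nat.mod_eq_of_lt k.isLt), hrow _ ?_, ?_⟩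
  · simp [Nat.mod_eq_of_lt k.isLt]
  · simp [doubledCoordinateOffsets]

theorem doubledCoordinateOffsets_eq_one {j j₁ : Fin m} (hj : j ≠ j₁)
    (hj₁ : (j₁ : ℕ) = Fin.ofNat d j) : doubledCoordinateOffsets m d j = 1 := by
  refine if_neg fun hjd => hj (Fin.ext ?_)
  rw [hj₁, Fin.val_ofNat, Nat.mod_eq_of_lt hjd]

theorem not_isAffinePhaseRetrievable_doubledCoordinate_perturbed {p q : Fin d} (hpq : p ≠ q)
    {j₁ : Fin m} (hj₁ : (j₁ : ℕ) = q) {ε : ℝ} (hε : ε ≠ 0) :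
    ¬ IsAffinePhaseRetrievable
      (doubledCoordinateRows m d + Pi.single j₁ (ε • EuclideanSpace.single p 1))
      (doubledCoordinateOffsets m d) := by
  have hsingle : ∀ i k : Fin d, inner ℝ (EuclideanSpace.single i (1 : ℝ)) (EuclideanSpace.single k 1) =
      if i = k then 1 else 0 :=
    orthonormal_iff_ite.1 EuclideanSpace.orthonormal_single
  have hq : Fin.ofNat d j₁ = q := Fin.ext (by simp [hj₁])
  set x := ε⁻¹ • EuclideanSpace.single p (1 : ℝ) - (1 / 2 : ℝ) • EuclideanSpace.single q (1 : ℝ)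
  set y := ε⁻¹ • EuclideanSpace.single p (1 : ℝ) - (3 / 2 : ℝ) • EuclideanSpace.single q (1 : ℝ)
  have hsub : x - y = EuclideanSpace.single q 1 := by module
  have hadd : x + y =
      (2 * ε⁻¹) • EuclideanSpace.single p (1 : ℝ) - (2 : ℝ) • EuclideanSpace.single q (1 : ℝ) := by
    module
  refine not_isAffinePhaseRetrievable (x := x) (y := y) ?_ fun j => ?_
  · rw [← sub_ne_zero, hsub]
    simp
  rw [hsub, hadd]
  by_cases hj : j = j₁
  · subst hj
    right
    simp only [Pi.add_apply, Pi.single_eq_same, doubledCoordinateRows, hq,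
      inner_add_left, inner_smul_left, inner_sub_right, inner_smul_right, hsingle]
    simp [hpq, hpq.symm, hε, doubledCoordinateOffsets, hj₁]
  simp only [Pi.add_apply, Pi.single_eq_of_ne hj, add_zero,
    doubledCoordinateRows, inner_sub_right, inner_smul_right, hsingle]
  by_cases hjq : Fin.ofNat d j = q
  · right
    rw [doubledCoordinateOffsets_eq_one hj (by rw [hj₁, hjq])]
    simp only [hjq, if_neg hpq.symm]
    norm_num
  · left
    simp only [hjq, if_false]

end Coordinates

theorem stmt_5 (m d : ℕ) (hd : 2 ≤ d) (hm : 2 * d ≤ m) :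
    ¬ IsOpen {p : (Fin m → EuclideanSpace ℝ (Fin d)) × (Fin m → ℝ) |
        Function.Injective
          (fun x : EuclideanSpace ℝ (Fin d) => fun j : Fin m => abs ((inner ℝ (p.1 j) (x) : ℝ) + p.2 j))} := by
  have : NeZero d := ⟨by omega⟩
  let p : Fin d := ⟨0, by omega⟩
  let q : Fin d := ⟨1, by omega⟩
  let j₁ : Fin m := ⟨1, by omega⟩
  have htilt : Continuous fun ε : ℝ =>
      (doubledCoordinateRows m d + Pi.single j₁ (ε • EuclideanSpace.single p (1 : ℝ)),
        doubledCoordinateOffsets m d) :=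
    (continuous_const.add ((continuous_single j₁).comp (continuous_id.smul continuous_const))).prodMk
      continuous_const
  refine not_isOpen_of_continuousAt (htilt.continuousAt (x := 0)) ?_ fun ε hε => ?_
  · simpa [IsAffinePhaseRetrievable] using isAffinePhaseRetrievable_doubledCoordinate hm
  · exact not_isAffinePhaseRetrievable_doubledCoordinate_perturbed (j₁ := j₁) (p := p) (q := q)
      (by simp [p, q]) rfl hε
end

section
/- Let 1 ≤ s ≤ d-1 and suppose (A,b) ∈ R^{m×d} × R^m is such that the map x ↦ (|⟨a_j,x⟩+b_j|)_{j=1}^m is injective on the set Σ_s(R^d) of vectors with at most s nonzero entries. Then m ≥ 2s+1. -/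
/-!
Suppose `m ≤ 2s` and restrict to vectors supported on the first `s + 1` coordinates, so that the
measurements become `|g_j x + b_j|` for linear functionals `g_j` on `ℝ^{s+1}`; a vector there is
`s`-sparse as soon as one coordinate vanishes. Two such vectors `x ≠ y` have the same measurements
if for every `j` either `g_j (x - y) = 0` or `g_j (x + y) = -2 b_j`.

If the `g_j` have a common nonzero kernel vector `u`, take `x - y = u`. Otherwise `s + 1` of them
form a basis of the dual space, so some `w` satisfies `g_j w = -b_j` for those `j`, while the
remaining `m - s - 1 ≤ s - 1` functionals have a common kernel `U` of dimension at least two. Inside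
`U` there is `u ≠ 0` such that `w + u` and `w - u` both have a zero coordinate.
-/

open Module Submodule

section Dual

variable {K V : Type*} [Field K] [AddCommGroup V] [Module K V]

lemma exists_mem_ne_zero_apply_eq_zero {U : Submodule K V} [FiniteDimensional K U]
    (hU : 1 < finrank K U) (f : Dual K V) : ∃ v ∈ U, v ≠ 0 ∧ f v = 0 := by
  have hrange : finrank K (LinearMap.range (f.domRestrict U)) ≤ 1 := by
    simpa using Submodule.finrank_le (LinearMap.range (f.domRestrict U))
  have hker := LinearMap.finrank_range_add_finrank_ker (f.domRestrict U)
  obtain ⟨v, hv⟩ := finrank_pos_iff_exists_ne_zero.mp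
    (show 0 < finrank K (LinearMap.ker (f.domRestrict U)) by omega)
  exact ⟨v, (v : U).2, fun h => hv (by ext; simpa using h), v.2⟩

variable [FiniteDimensional K V]

lemma exists_ne_zero_forall_apply_eq_zero_of_span_ne_top {κ : Type*} (g : κ → Dual K V)
    (hg : span K (Set.range g) ≠ ⊤) : ∃ u : V, u ≠ 0 ∧ ∀ j, g j u = 0 := by
  have hsum := Subspace.finrank_add_finrank_dualCoannihilator_eq (span K (Set.range g))
  have hlt := Submodule.finrank_lt hg
  rw [Subspace.dual_finrank_eq] at hlt
  obtain ⟨u, hu, hu0⟩ := exists_mem_ne_zero_of_ne_bot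
    ((one_le_finrank_iff (S := (span K (Set.range g)).dualCoannihilator)).mp (by omega))
  exact ⟨u, hu0, fun j => (mem_dualCoannihilator u).mp hu _ (subset_span ⟨j, rfl⟩)⟩

lemma finrank_le_finrank_dualCoannihilator_add_card {κ : Type*} (g : κ → Dual K V)
    (S : Finset κ) :
    finrank K V ≤ finrank K (span K (g '' S)).dualCoannihilator + S.card := by
  classical
  have hspan : finrank K (span K (g '' S)) ≤ S.card := by
    rw [← Finset.coe_image]
    exact (finrank_span_finset_le_card _).trans Finset.card_image_le
  have := Subspace.finrank_add_finrank_dualCoannihilator_eq (span K (g '' S))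
  omega

lemma exists_finset_card_eq_finrank_forall_exists_apply_eq {κ : Type*} [Finite κ]
    (g : κ → Dual K V) (hg : span K (Set.range g) = ⊤) :
    ∃ J : Finset κ, J.card = finrank K V ∧ ∀ c : κ → K, ∃ w : V, ∀ j ∈ J, g j w = c j := by
  obtain ⟨ι, a, ha, hspan, hli⟩ := exists_linearIndependent' K g
  have : Fintype ι := @Fintype.ofFinite _ (Finite.of_injective a ha)
  let B : Basis ι K (Dual K V) := Basis.mk hli (by rw [hspan, hg])
  have hB (k : ι) : B k = g (a k) := Basis.mk_apply _ _ k
  refine ⟨Finset.univ.map ⟨a, ha⟩, ?_, fun c => ⟨(evalEquiv K V).symm (B.constr K (c ∘ a)), ?_⟩⟩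
  · rw [Finset.card_map, Finset.card_univ, ← finrank_eq_card_basis B, Subspace.dual_finrank_eq]
  · simp only [Finset.mem_map, Finset.mem_univ, true_and, Function.Embedding.coeFn_mk]
    rintro _ ⟨k, rfl⟩
    rw [apply_evalEquiv_symm_apply, ← hB, Basis.constr_basis, Function.comp_apply]

end Dual

lemma exists_mem_ne_zero_add_apply_eq_zero_sub_apply_eq_zero {K ι : Type*} [Field K]
    [Fintype ι] {U : Submodule K (ι → K)} (hU : 1 < finrank K U) (w : ι → K) :
    ∃ u ∈ U, u ≠ 0 ∧ (∃ i, (w + u) i = 0) ∧ ∃ k, (w - u) k = 0 := by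
  obtain ⟨p, hpU, hp0⟩ :=
    exists_mem_ne_zero_of_ne_bot ((one_le_finrank_iff (S := U)).mp (by omega))
  obtain ⟨i, hpi⟩ : ∃ i, p i ≠ 0 := Function.ne_iff.mp hp0
  obtain ⟨v, hvU, hv0, hvi⟩ := exists_mem_ne_zero_apply_eq_zero hU (LinearMap.proj i)
  obtain ⟨k, hvk⟩ : ∃ k, v k ≠ 0 := Function.ne_iff.mp hv0
  simp only [LinearMap.coe_proj, Function.eval] at hvi
  by_cases hwi : w i = 0
  · exact ⟨v, hvU, hv0, ⟨i, by simp [hwi, hvi]⟩, i, by simp [hwi, hvi]⟩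
  -- since `p i ≠ 0 = v i` and `v k ≠ 0`, a combination of `p` and `v` takes any values at `i`, `k`
  set t := (w k + w i / p i * p k) / v k
  have hui : (-(w i / p i) • p + t • v) i = -w i := by
    simp only [Pi.add_apply, Pi.smul_apply, smul_eq_mul, hvi, mul_zero, add_zero]
    field_simp
  refine ⟨-(w i / p i) • p + t • v, add_mem (smul_mem _ _ hpU) (smul_mem _ _ hvU),
    fun h => hwi (by simpa using hui.symm.trans (congrFun h i)),
    ⟨i, by rw [Pi.add_apply, hui, add_neg_cancel]⟩, k, ?_⟩
  simp only [Pi.sub_apply, Pi.add_apply, Pi.smul_apply, smul_eq_mul, t]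
  field_simp
  ring

theorem exists_ne_abs_apply_add_eq_abs_apply_add {ι κ : Type*} [Fintype ι] [Fintype κ]
    (hι : 2 ≤ Fintype.card ι) (g : κ → Dual ℝ (ι → ℝ)) (b : κ → ℝ)
    (hκ : Fintype.card κ + 2 ≤ 2 * Fintype.card ι) :
    ∃ x y : ι → ℝ, x ≠ y ∧ (∃ i, x i = 0) ∧ (∃ k, y k = 0) ∧
      ∀ j, |g j x + b j| = |g j y + b j| := by
  classical
  by_cases hg : span ℝ (Set.range g) = ⊤
  · obtain ⟨J, hJ, hsolve⟩ := exists_finset_card_eq_finrank_forall_exists_apply_eq g hg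
    obtain ⟨w, hw⟩ := hsolve (-b)
    rw [finrank_fintype_fun_eq_card] at hJ
    have hU : 1 < finrank ℝ (span ℝ (g '' ↑Jᶜ)).dualCoannihilator := by
      have hdim := finrank_le_finrank_dualCoannihilator_add_card g Jᶜ
      have hJκ := J.card_le_univ
      rw [Finset.card_compl, finrank_fintype_fun_eq_card] at hdim
      omega
    obtain ⟨u, huU, hu0, ⟨i, hi⟩, k, hk⟩ :=
      exists_mem_ne_zero_add_apply_eq_zero_sub_apply_eq_zero hU w
    refine ⟨w + u, w - u, fun h => hu0 ?_, ⟨i, hi⟩, ⟨k, hk⟩, fun j => ?_⟩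
    · rwa [sub_eq_add_neg, add_right_inj, self_eq_neg] at h
    have hj : g j u = 0 ∨ g j w + b j = 0 := by
      by_cases hj : j ∈ J
      · simp [hw j hj]
      · exact .inl <| (mem_dualCoannihilator u).mp huU _ (subset_span ⟨j, by simpa, rfl⟩)
    rw [map_add, map_sub, add_right_comm, sub_add_eq_add_sub]
    rcases hj with hj | hj
    · rw [hj, add_zero, sub_zero]
    · rw [hj, zero_add, zero_sub, abs_neg]
  · obtain ⟨u, hu0, hu⟩ := exists_ne_zero_forall_apply_eq_zero_of_span_ne_top g hg
    obtain ⟨i, k, hik⟩ := Fintype.exists_pair_of_one_lt_card hι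
    refine ⟨u - Pi.single i (u i), -Pi.single i (u i), fun h => hu0 ?_, ⟨i, by simp⟩,
      ⟨k, by simp [hik.symm]⟩, fun j => by rw [map_sub, hu j, zero_sub, map_neg]⟩
    rwa [sub_eq_iff_eq_add, neg_add_cancel] at h

lemma card_filter_extend_ne_zero {ι η R : Type*} [Fintype ι] [Fintype η] [Zero R]
    [DecidableEq R] {f : ι → η} (hf : Function.Injective f) (x : ι → R) :
    (Finset.univ.filter fun j => Function.extend f x 0 j ≠ 0).card =
      (Finset.univ.filter fun i => x i ≠ 0).card := by
  classical
  rw [← Finset.card_map ⟨f, hf⟩]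
  congr 1
  ext j
  by_cases hj : ∃ i, f i = j
  · obtain ⟨i, rfl⟩ := hj
    simp [hf.extend_apply]
  · simp [not_exists.mp hj]

lemma card_filter_ne_zero_lt {ι R : Type*} [Fintype ι] [Zero R] [DecidableEq R] {x : ι → R}
    {i : ι} (hi : x i = 0) : (Finset.univ.filter fun j => x j ≠ 0).card < Fintype.card ι :=
  Finset.card_lt_univ_of_notMem (x := i) (by simp [hi])

noncomputable def euclideanExtendByZero {ι η : Type*} (f : ι → η) :
    (ι → ℝ) →ₗ[ℝ] EuclideanSpace ℝ η :=
  (WithLp.linearEquiv 2 ℝ (η → ℝ)).symm.toLinearMap ∘ₗ Function.ExtendByZero.linearMap ℝ f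

lemma euclideanExtendByZero_apply {ι η : Type*} (f : ι → η) (x : ι → ℝ) (j : η) :
    euclideanExtendByZero f x j = Function.extend f x 0 j := rfl

lemma euclideanExtendByZero_injective {ι η : Type*} {f : ι → η} (hf : Function.Injective f) :
    Function.Injective (euclideanExtendByZero f) := fun x y h =>
  Function.extend_injective hf (0 : η → ℝ) <| funext fun j => by
    simpa only [euclideanExtendByZero_apply] using congrArg (· j) h

lemma card_filter_euclideanExtendByZero_ne_zero {ι η : Type*} [Fintype ι] [Fintype η]
    {f : ι → η} (hf : Function.Injective f) (x : ι → ℝ) :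
    (Finset.univ.filter fun j => euclideanExtendByZero f x j ≠ 0).card =
      (Finset.univ.filter fun i => x i ≠ 0).card :=
  card_filter_extend_ne_zero hf x

theorem stmt_7 (m d s : ℕ) (hs : 1 ≤ s) (hsd : s + 1 ≤ d)
    (A : Fin m → EuclideanSpace ℝ (Fin d)) (b : Fin m → ℝ)
    (h : Set.InjOn
      (fun x : EuclideanSpace ℝ (Fin d) => fun j : Fin m => abs ((inner ℝ (A j) (x) : ℝ) + b j))
      {x : EuclideanSpace ℝ (Fin d) | (Finset.univ.filter (fun i => x i ≠ 0)).card ≤ s}) :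
    2 * s + 1 ≤ m := by
  by_contra! hm
  have hcast := Fin.castLE_injective hsd
  have hsparse (x : Fin (s + 1) → ℝ) (i : Fin (s + 1)) (hi : x i = 0) :
      (Finset.univ.filter fun j => euclideanExtendByZero (Fin.castLE hsd) x j ≠ 0).card ≤ s := by
    have := card_filter_ne_zero_lt hi
    rw [← card_filter_euclideanExtendByZero_ne_zero hcast, Fintype.card_fin] at this
    omega
  obtain ⟨x, y, hxy, ⟨i, hxi⟩, ⟨k, hyk⟩, habs⟩ :=
    exists_ne_abs_apply_add_eq_abs_apply_add (ι := Fin (s + 1)) (κ := Fin m)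
      (by rw [Fintype.card_fin]; omega)
      (fun j => (innerₛₗ ℝ (A j)).comp (euclideanExtendByZero (Fin.castLE hsd))) b
      (by rw [Fintype.card_fin, Fintype.card_fin]; omega)
  exact hxy <| euclideanExtendByZero_injective hcast <|
    h (hsparse x i hxi) (hsparse y k hyk) (funext habs)
end

section
/- Let A = (a_1,...,a_m)^T ∈ C^{m×d} and b ∈ C^m. The map M_{A,b}(x) = (|⟨a_j,x⟩+b_j|)_{j=1}^m is injective on C^d if and only if for all u,v ∈ C^d with u ≠ 0, there exists k ∈ {1,...,m} such that Re(⟨u,a_k⟩(⟨a_k,v⟩+b_k)) ≠ 0. -/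
/-!
Two distinct points can always be written as `v + u` and `v - u` with `u ≠ 0`, so injectivity
fails exactly when some such pair has the same measurements. Since
`‖w + z‖² - ‖w - z‖² = 4 Re (conj z * w)`, the `k`-th measurements of `v ± u` agree exactly when
`Re (⟪u, a_k⟫ (⟪a_k, v⟫ + b_k)) = 0`.
-/

open Function RCLike

theorem Function.injective_iff_forall_map_add_ne_map_sub {K E β : Type*} [Field K]
    [NeZero (2 : K)] [AddCommGroup E] [Module K E] {f : E → β} :
    Injective f ↔ ∀ u v : E, u ≠ 0 → f (v + u) ≠ f (v - u) := by
  refine ⟨fun hf u v hu h => hu ?_, fun h x y hxy => ?_⟩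
  · have h2u : (2 : K) • u = 0 :=
      calc (2 : K) • u = (v + u) - (v - u) := by module
        _ = 0 := by rw [hf h, sub_self]
    exact (smul_eq_zero.mp h2u).resolve_left two_ne_zero
  · by_contra hne
    have hu : (2⁻¹ : K) • (x - y) ≠ 0 :=
      smul_ne_zero (inv_ne_zero two_ne_zero) (sub_ne_zero.mpr hne)
    refine h _ ((2⁻¹ : K) • (x + y)) hu ?_
    convert hxy using 2 <;> match_scalars <;> field_simp <;> ring

section

variable {𝕜 E : Type*} [RCLike 𝕜] [NormedAddCommGroup E] [InnerProductSpace 𝕜 E]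

local notation "⟪" x ", " y "⟫" => inner 𝕜 x y

theorem norm_add_eq_norm_sub_iff_re_inner_eq_zero (x y : E) :
    ‖x + y‖ = ‖x - y‖ ↔ re ⟪x, y⟫ = 0 := by
  rw [← sq_eq_sq₀ (norm_nonneg _) (norm_nonneg _), norm_add_sq (𝕜 := 𝕜), norm_sub_sq (𝕜 := 𝕜)]
  constructor <;> intro h <;> linarith

theorem norm_inner_add_eq_norm_inner_sub_iff (a u v : E) (c : 𝕜) :
    ‖⟪a, v + u⟫ + c‖ = ‖⟪a, v - u⟫ + c‖ ↔ re (⟪u, a⟫ * (⟪a, v⟫ + c)) = 0 := by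
  have hplus : ⟪a, v + u⟫ + c = (⟪a, v⟫ + c) + ⟪a, u⟫ := by rw [inner_add_right]; ring
  have hminus : ⟪a, v - u⟫ + c = (⟪a, v⟫ + c) - ⟪a, u⟫ := by rw [inner_sub_right]; ring
  rw [hplus, hminus, norm_add_eq_norm_sub_iff_re_inner_eq_zero (𝕜 := 𝕜), ← inner_conj_symm a u,
    inner_apply (𝕜 := 𝕜), ← map_mul, conj_re]

theorem injective_norm_inner_add_iff {ι : Type*} (A : ι → E) (b : ι → 𝕜) :
    Injective (fun x : E => fun j => ‖⟪A j, x⟫ + b j‖) ↔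
      ∀ u v : E, u ≠ 0 → ∃ k, re (⟪u, A k⟫ * (⟪A k, v⟫ + b k)) ≠ 0 := by
  simp only [injective_iff_forall_map_add_ne_map_sub (K := 𝕜), ne_eq, funext_iff, not_forall,
    norm_inner_add_eq_norm_inner_sub_iff]

end

theorem stmt_9 (m d : ℕ) (A : Fin m → EuclideanSpace ℂ (Fin d)) (b : Fin m → ℂ) :
    Function.Injective
      (fun x : EuclideanSpace ℂ (Fin d) => fun j : Fin m => ‖(inner ℂ (A j) x : ℂ) + b j‖) ↔
    ∀ u v : EuclideanSpace ℂ (Fin d), u ≠ 0 →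
      ∃ k : Fin m, ((inner ℂ u (A k) : ℂ) * ((inner ℂ (A k) v : ℂ) + b k)).re ≠ 0 :=
  injective_norm_inner_add_iff A b
end

section
/- Let A ∈ C^{m×d} and b ∈ C^m. If m < 3d, then the map x ↦ (|⟨a_j,x⟩+b_j|)_{j=1}^m is not injective on C^d, where a_j are the rows of A. -/
/-!
Since `|c + w| = |c - w|` whenever `⟪c, w⟫_ℝ = 0`, the points `x + u` and `x - u` have the same
image as soon as `⟪a j, u⟫` is real-orthogonal to `⟪a j, x⟫ + b j` for every `j`. If the `a j`
do not span, take `x = 0` and `u ⟂ a j`. Otherwise pick `d` of them forming a basis and choose `x`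
making the corresponding `d` residuals `⟪a j, x⟫ + b j` vanish; the remaining `m - d < 2d`
conditions are real-linear in `u`, and `E` has real dimension `2d`, so a nonzero `u` satisfies
them all.
-/

open Module Submodule Set
open scoped InnerProductSpace

variable {E : Type*} [NormedAddCommGroup E] [InnerProductSpace ℂ E] {ι : Type*}

noncomputable def affinePhaseMap (a : ι → E) (b : ι → ℂ) (x : E) : ι → ℝ :=
  fun j => ‖⟪a j, x⟫_ℂ + b j‖

theorem affinePhaseMap_add_eq_sub {a : ι → E} {b : ι → ℂ} {x u : E}
    (h : ∀ j, ⟪⟪a j, x⟫_ℂ + b j, ⟪a j, u⟫_ℂ⟫_ℝ = 0) :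
    affinePhaseMap a b (x + u) = affinePhaseMap a b (x - u) := by
  funext j
  simp only [affinePhaseMap, inner_add_right, inner_sub_right]
  rw [add_right_comm, sub_add_eq_add_sub]
  exact (norm_sub_eq_norm_add (by rw [real_inner_comm]; exact h j)).symm

theorem not_injective_affinePhaseMap_of_forall_real_inner_eq_zero {a : ι → E} {b : ι → ℂ}
    {x u : E} (hu : u ≠ 0) (h : ∀ j, ⟪⟪a j, x⟫_ℂ + b j, ⟪a j, u⟫_ℂ⟫_ℝ = 0) :
    ¬ Function.Injective (affinePhaseMap a b) := fun hinj => by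
  have hxu : x + u = x - u := hinj (affinePhaseMap_add_eq_sub h)
  rw [← sub_eq_zero, add_sub_sub_cancel, ← two_smul ℂ, smul_eq_zero] at hxu
  exact hu (hxu.resolve_left two_ne_zero)

theorem Module.Basis.surjective_inner [FiniteDimensional ℂ E] {κ : Type*} [Fintype κ]
    (B : Basis κ ℂ E) : Function.Surjective fun x : E => fun k => ⟪B k, x⟫_ℂ := by
  let T : E →ₗ[ℂ] κ → ℂ := LinearMap.pi fun k => innerₛₗ ℂ (B k)
  have hT : Function.Injective T := fun x y hxy =>
    InnerProductSpace.ext_inner_left_basis B fun k => congrFun hxy k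
  refine (LinearMap.injective_iff_surjective_of_finrank_eq_finrank ?_).mp hT
  rw [finrank_eq_card_basis B, finrank_fintype_fun_eq_card]

theorem not_injective_affinePhaseMap_of_span_ne_top [FiniteDimensional ℂ E] {a : ι → E}
    (b : ι → ℂ) (hspan : span ℂ (range a) ≠ ⊤) : ¬ Function.Injective (affinePhaseMap a b) := by
  have hperp : (span ℂ (range a))ᗮ ≠ ⊥ := fun h => hspan (orthogonal_eq_bot_iff.mp h)
  obtain ⟨u, hu, hu0⟩ := exists_mem_ne_zero_of_ne_bot hperp
  refine not_injective_affinePhaseMap_of_forall_real_inner_eq_zero (x := 0) hu0 fun j => ?_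
  rw [hu (a j) (subset_span ⟨j, rfl⟩), inner_zero_right]

theorem not_injective_affinePhaseMap_of_span_eq_top [Fintype ι] [FiniteDimensional ℂ E]
    {a : ι → E} (b : ι → ℂ) (hcard : Fintype.card ι < 3 * finrank ℂ E)
    (hspan : span ℂ (range a) = ⊤) : ¬ Function.Injective (affinePhaseMap a b) := by
  classical
  obtain ⟨κ, e, he, hspan_e, hind⟩ := exists_linearIndependent' ℂ a
  have : Fintype κ := Fintype.ofInjective e he
  let B : Basis κ ℂ E := Basis.mk hind (by rw [hspan_e, hspan])
  obtain ⟨x, hx⟩ := B.surjective_inner fun k => -b (e k)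
  have hres : ∀ k, ⟪a (e k), x⟫_ℂ + b (e k) = 0 := fun k => by
    have hxk : ⟪B k, x⟫_ℂ = -b (e k) := congrFun hx k
    rw [Basis.mk_apply, Function.comp_apply] at hxk
    rw [hxk, neg_add_cancel]
  let L : E →ₗ[ℝ] {j // j ∉ range e} → ℝ := LinearMap.pi fun j =>
    innerₛₗ ℝ (⟪a j, x⟫_ℂ + b j) ∘ₗ (innerₛₗ ℂ (a j)).restrictScalars ℝ
  have hdim : finrank ℝ ({j // j ∉ range e} → ℝ) < finrank ℝ E := by
    rw [finrank_fintype_fun_eq_card, Fintype.card_subtype_compl, finrank_real_of_complex,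
      card_range_of_injective he, ← finrank_eq_card_basis B]
    omega
  obtain ⟨u, hu, hu0⟩ :=
    exists_mem_ne_zero_of_ne_bot (LinearMap.ker_ne_bot_of_finrank_lt (f := L) hdim)
  refine not_injective_affinePhaseMap_of_forall_real_inner_eq_zero (x := x) hu0 fun j => ?_
  by_cases hj : j ∈ range e
  · obtain ⟨k, rfl⟩ := hj
    rw [hres k, inner_zero_left]
  · exact congrFun hu ⟨j, hj⟩

theorem not_injective_affinePhaseMap [Fintype ι] [FiniteDimensional ℂ E] (a : ι → E)
    (b : ι → ℂ) (hcard : Fintype.card ι < 3 * finrank ℂ E) :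
    ¬ Function.Injective (affinePhaseMap a b) := by
  by_cases hspan : span ℂ (range a) = ⊤
  · exact not_injective_affinePhaseMap_of_span_eq_top b hcard hspan
  · exact not_injective_affinePhaseMap_of_span_ne_top b hspan

theorem stmt_12 (m d : ℕ) (hm : m < 3 * d) (A : Fin m → EuclideanSpace ℂ (Fin d)) (b : Fin m → ℂ) :
    ¬ Function.Injective
      (fun x : EuclideanSpace ℂ (Fin d) => fun j : Fin m => ‖(inner ℂ (A j) x : ℂ) + b j‖) :=
  not_injective_affinePhaseMap A b (by simpa using hm)
end

section
/- Let B = (a_1,...,a_d) ∈ C^{d×d} be nonsingular, let A = (B^T, B^T, B^T)^T ∈ C^{3d×d} be three stacked copies of B's rows, and let b = (b_{11},...,b_{d1},b_{12},...,b_{d2},b_{13},...,b_{d3}) ∈ C^{3d} be such that for each 1 ≤ j ≤ d the three complex numbers b_{j1}, b_{j2}, b_{j3} are not collinear in the complex plane. Then the map x ↦ (|⟨a_j,x⟩ + b_{jk}|)_{1≤j≤d, 1≤k≤3} is injective on C^d. -/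
/-!
If `‖⟪a_j, x⟫ + b_{jk}‖ = ‖⟪a_j, y⟫ + b_{jk}‖` for `k = 1, 2, 3`, the three points `b_{jk}` are
equidistant from `-⟪a_j, x⟫` and `-⟪a_j, y⟫`; were these distinct, all three would lie on their
perpendicular bisector, a line in `ℂ ≅ ℝ²`. Hence `⟪a_j, x⟫ = ⟪a_j, y⟫` for every `j`, and since
the `a_j` form a basis, `x = y`.
-/

open Module AffineSubspace

theorem collinear_of_subset_perpBisector {V P : Type*} [NormedAddCommGroup V]
    [InnerProductSpace ℝ V] [MetricSpace P] [NormedAddTorsor V P] (hV : finrank ℝ V = 2)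
    {p₁ p₂ : P} (hp : p₁ ≠ p₂) {s : Set P} (hs : s ⊆ perpBisector p₁ p₂) :
    Collinear ℝ s := by
  have : FiniteDimensional ℝ V := .of_finrank_pos (by omega)
  have : Fact (finrank ℝ V = 1 + 1) := ⟨hV⟩
  refine Collinear.subset hs ?_
  rw [collinear_iff_finrank_le_one, ← direction_eq_vectorSpan, direction_perpBisector,
    Submodule.finrank_orthogonal_span_singleton (n := 1) (vsub_ne_zero.mpr hp.symm)]

theorem LinearIndependent.ext_inner_left {𝕜 E ι : Type*} [RCLike 𝕜] [NormedAddCommGroup E]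
    [InnerProductSpace 𝕜 E] [FiniteDimensional 𝕜 E] [Fintype ι] {a : ι → E}
    (ha : LinearIndependent 𝕜 a) (hcard : Fintype.card ι = finrank 𝕜 E) {x y : E}
    (h : ∀ i, inner 𝕜 (a i) x = inner 𝕜 (a i) y) : x = y :=
  InnerProductSpace.ext_inner_left_basis (basisOfLinearIndependentOfCardEqFinrank' a ha hcard)
    (by simpa using h)

theorem stmt_13 (d : ℕ) (a : Fin d → EuclideanSpace ℂ (Fin d))
    (ha : LinearIndependent ℂ a)
    (b : Fin d → Fin 3 → ℂ) (hb : ∀ j : Fin d, ¬ Collinear ℝ (Set.range (b j))) :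
    Function.Injective
      (fun x : EuclideanSpace ℂ (Fin d) => fun p : Fin d × Fin 3 =>
        ‖(inner ℂ (a p.1) x : ℂ) + b p.1 p.2‖) := by
  intro x y hxy
  refine ha.ext_inner_left (by simp) fun j => ?_
  by_contra hne
  refine hb j <| collinear_of_subset_perpBisector Complex.finrank_real_complex
    (neg_injective.ne hne) ?_
  rintro _ ⟨k, rfl⟩
  rw [SetLike.mem_coe, mem_perpBisector_iff_dist_eq, dist_eq_norm, dist_eq_norm,
    sub_neg_eq_add, sub_neg_eq_add, add_comm, add_comm (b j k)]
  exact congrFun hxy (j, k)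
end

section
/- Let H = R or C, let (A,b) ∈ H^{m×d} × H^m be affine phase retrievable, and let Ω ⊂ H^d be a compact set. Then there exists c_2 > 0 such that for all x, y ∈ Ω: ‖M²_{A,b}(x) − M²_{A,b}(y)‖ ≥ c_2 ‖x − y‖, where M²_{A,b}(x) = (|⟨a_j,x⟩+b_j|²)_{j=1}^m. -/
/-!
Write `M² x = (‖⟪a_j, x⟫ + b_j‖²)_j`. Since `‖z‖² - ‖w‖² = Re((z - w) conj(z + w))`, one has
`M² x - M² y = D (x + y) (x - y)` with `D s u = (Re(⟪a_j, u⟫ conj(⟪a_j, s⟫ + 2 b_j)))_j`, which is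
continuous and real-homogeneous in `u`. Affine phase retrievability makes `D s u ≠ 0` for `u ≠ 0`
(take `x = (s + u)/2`, `y = (s - u)/2`), so `‖D‖` has a positive minimum `c₂` on the compact set
`(Ω + Ω) × sphere 0 1`, and `‖M² x - M² y‖ = ‖x - y‖ ‖D (x + y) ((x - y)/‖x - y‖)‖ ≥ c₂ ‖x - y‖`.
-/

open RCLike ComplexConjugate
open scoped Pointwise

namespace AffinePhaseRetrieval

variable {K E ι : Type*} [RCLike K] [NormedAddCommGroup E] [InnerProductSpace K E]

lemma norm_sq_sub_norm_sq (z w : K) : ‖z‖ ^ 2 - ‖w‖ ^ 2 = re ((z - w) * conj (z + w)) := by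
  have h_cross : re (z * conj w - w * conj z) = 0 := by
    have : conj (w * conj z) = z * conj w := by simp only [map_mul, conj_conj]; ring
    rw [map_sub, ← this, conj_re, sub_self]
  have h_expand :
      (z - w) * conj (z + w) = z * conj z - w * conj w + (z * conj w - w * conj z) := by
    simp only [map_add]; ring
  rw [h_expand, map_add, h_cross, add_zero, map_sub, mul_conj, mul_conj]
  norm_cast

def affineMeasurement (A : ι → E) (b : ι → K) (x : E) : ι → ℝ :=
  fun j => ‖inner K (A j) x + b j‖

def sqMeasurementDiff (A : ι → E) (b : ι → K) (s u : E) : EuclideanSpace ℝ ι :=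
  WithLp.toLp 2 fun j => re (inner K (A j) u * conj (inner K (A j) s + 2 * b j))

variable (A : ι → E) (b : ι → K)

lemma toLp_sq_sub_sq_eq_sqMeasurementDiff (x y : E) :
    (WithLp.toLp 2 (fun j => affineMeasurement A b x j ^ 2 - affineMeasurement A b y j ^ 2) :
        EuclideanSpace ℝ ι) = sqMeasurementDiff A b (x + y) (x - y) := by
  ext j
  simp only [affineMeasurement, sqMeasurementDiff, PiLp.toLp_apply, norm_sq_sub_norm_sq,
    inner_add_right, inner_sub_right]
  ring_nf

lemma sqMeasurementDiff_ofReal_smul (s u : E) (t : ℝ) :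
    sqMeasurementDiff A b s ((t : K) • u) = t • sqMeasurementDiff A b s u := by
  ext j
  simp [sqMeasurementDiff, inner_smul_right, mul_assoc]

lemma continuous_sqMeasurementDiff :
    Continuous fun p : E × E => sqMeasurementDiff A b p.1 p.2 := by
  refine (PiLp.continuous_toLp 2 _).comp (continuous_pi fun j => ?_)
  refine continuous_re.comp (.mul (continuous_const.inner continuous_snd) ?_)
  exact continuous_conj.comp ((continuous_const.inner continuous_fst).add continuous_const)

lemma sqMeasurementDiff_ne_zero (hpr : Function.Injective (affineMeasurement A b)) (s : E) {u : E}
    (hu : u ≠ 0) : sqMeasurementDiff A b s u ≠ 0 := by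
  intro h
  set x : E := (2 : K)⁻¹ • (s + u)
  set y : E := (2 : K)⁻¹ • (s - u)
  have hsum : x + y = s := by simp only [x, y]; module
  have hdiff : x - y = u := by simp only [x, y]; module
  have hxy : affineMeasurement A b x = affineMeasurement A b y := by
    funext j
    have hj := congrArg (· j) (toLp_sq_sub_sq_eq_sqMeasurementDiff A b x y)
    simp only [hsum, hdiff, h, PiLp.zero_apply, sub_eq_zero] at hj
    exact (pow_left_inj₀ (norm_nonneg _) (norm_nonneg _) two_ne_zero).mp hj
  exact hu (hdiff ▸ sub_eq_zero.mpr (hpr hxy))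

lemma exists_pos_mul_norm_sub_le_norm_sqMeasurementDiff [Fintype ι] [ProperSpace E]
    (hpr : Function.Injective (affineMeasurement A b)) {Ω : Set E} (hΩ : IsCompact Ω) :
    ∃ c > 0, ∀ x ∈ Ω, ∀ y ∈ Ω, c * ‖x - y‖ ≤ ‖sqMeasurementDiff A b (x + y) (x - y)‖ := by
  have hT : IsCompact ((Ω + Ω) ×ˢ Metric.sphere (0 : E) 1) :=
    (hΩ.add hΩ).prod (isCompact_sphere 0 1)
  have hpos : ∀ p ∈ (Ω + Ω) ×ˢ Metric.sphere (0 : E) 1,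
      0 < ‖sqMeasurementDiff A b p.1 p.2‖ := by
    rintro ⟨s, u⟩ ⟨-, hu⟩
    refine norm_pos_iff.mpr (sqMeasurementDiff_ne_zero A b hpr s ?_)
    rintro rfl
    simp at hu
  obtain ⟨c, hc, hc_le⟩ :=
    hT.exists_forall_le' (continuous_sqMeasurementDiff A b).norm.continuousOn hpos
  refine ⟨c, hc, fun x hx y hy => ?_⟩
  rcases eq_or_ne x y with rfl | hne
  · simp
  have hr : ‖x - y‖ ≠ 0 := norm_ne_zero_iff.mpr (sub_ne_zero.mpr hne)
  set u : E := (‖x - y‖ : K)⁻¹ • (x - y)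
  have hu : u ∈ Metric.sphere (0 : E) 1 := by
    rw [mem_sphere_zero_iff_norm, norm_smul, norm_inv, norm_ofReal, abs_norm, inv_mul_cancel₀ hr]
  have hxy : x - y = ((‖x - y‖ : ℝ) : K) • u := by
    rw [smul_inv_smul₀ (ofReal_ne_zero.mpr hr)]
  calc c * ‖x - y‖ ≤ ‖sqMeasurementDiff A b (x + y) u‖ * ‖x - y‖ :=
        mul_le_mul_of_nonneg_right (hc_le (x + y, u) (Set.mk_mem_prod (Set.add_mem_add hx hy) hu))
          (norm_nonneg _)
    _ = ‖‖x - y‖ • sqMeasurementDiff A b (x + y) u‖ := by rw [norm_smul, norm_norm, mul_comm]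
    _ = ‖sqMeasurementDiff A b (x + y) (x - y)‖ := by rw [← sqMeasurementDiff_ofReal_smul, ← hxy]

end AffinePhaseRetrieval

open AffinePhaseRetrieval in
theorem stmt_15 {K : Type*} [RCLike K] (m d : ℕ)
    (A : Fin m → EuclideanSpace K (Fin d)) (b : Fin m → K)
    (hpr : Function.Injective
      (fun x : EuclideanSpace K (Fin d) => fun j : Fin m => ‖(inner K (A j) x : K) + b j‖))
    (Ω : Set (EuclideanSpace K (Fin d))) (hΩ : IsCompact Ω) :
    ∃ c₂ > 0, ∀ x ∈ Ω, ∀ y ∈ Ω,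
      c₂ * ‖x - y‖ ≤
        ‖(show EuclideanSpace ℝ (Fin m) from
            WithLp.toLp 2 (fun j => ‖(inner K (A j) x : K) + b j‖ ^ 2 - ‖(inner K (A j) y : K) + b j‖ ^ 2))‖ := by
  obtain ⟨c, hc, hbound⟩ := exists_pos_mul_norm_sub_le_norm_sqMeasurementDiff A b hpr hΩ
  refine ⟨c, hc, fun x hx y hy => ?_⟩
  convert hbound x hx y hy using 2
  exact toLp_sq_sub_sq_eq_sqMeasurementDiff A b x y
end

section
/- Let H = R or C and let (A,b) ∈ H^{m×d} × H^m with A ≠ 0 (in particular m, d ≥ 1). Then the map M_{A,b}(x) = (|⟨a_j,x⟩+b_j|)_{j=1}^m is not bi-Lipschitz on H^d: there is no constant c > 0 such that ‖M_{A,b}(x) − M_{A,b}(y)‖ ≥ c ‖x − y‖ for all x, y ∈ H^d. -/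
open scoped InnerProductSpace

/-!
The map `M x = (|⟨a_j, x⟩ + b_j|)_j` is even up to a bounded error: by the reverse triangle
inequality `| |w + β| - |-w + β| | ≤ 2|β|`, so `‖M x - M (-x)‖ ≤ 2‖b‖` for every `x`. A lower
Lipschitz bound `c‖x - y‖ ≤ ‖M x - M y‖` would instead force `‖M x - M (-x)‖ ≥ 2c‖x‖`, which is
unbounded because `A ≠ 0` makes the domain nontrivial.
-/

theorem abs_norm_add_sub_norm_neg_add_le {E : Type*} [SeminormedAddCommGroup E] (w β : E) :
    |‖w + β‖ - ‖-w + β‖| ≤ 2 * ‖β‖ :=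
  calc |‖w + β‖ - ‖-w + β‖| = |‖w + β‖ - ‖w - β‖| := by rw [neg_add_eq_sub, norm_sub_rev]
    _ ≤ ‖(w + β) - (w - β)‖ := abs_norm_sub_norm_le _ _
    _ = ‖(2 : ℕ) • β‖ := by rw [two_nsmul, add_sub_sub_cancel]
    _ ≤ 2 * ‖β‖ := by simpa using norm_nsmul_le (n := 2) (a := β)

theorem PiLp.norm_le_of_forall_norm_apply_le {ι : Type*} [Fintype ι] {β γ : ι → Type*}
    [∀ i, SeminormedAddCommGroup (β i)] [∀ i, SeminormedAddCommGroup (γ i)]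
    {x : PiLp 2 β} {y : PiLp 2 γ} (h : ∀ i, ‖x i‖ ≤ ‖y i‖) : ‖x‖ ≤ ‖y‖ := by
  rw [PiLp.norm_eq_of_L2, PiLp.norm_eq_of_L2]
  gcongr with i
  exact h i

theorem not_exists_lower_lipschitz_of_norm_sub_comp_neg_le {E F : Type*}
    [NormedAddCommGroup E] [NormedSpace ℝ E] [Nontrivial E] [SeminormedAddCommGroup F]
    {f : E → F} {B : ℝ} (hf : ∀ x, ‖f x - f (-x)‖ ≤ B) :
    ¬ ∃ c > 0, ∀ x y, c * ‖x - y‖ ≤ ‖f x - f y‖ := by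
  rintro ⟨c, hc, hlow⟩
  obtain ⟨x, hx⟩ := NormedSpace.exists_lt_norm ℝ E (B / (2 * c))
  have hsub : ‖x - -x‖ = 2 * ‖x‖ := by rw [sub_neg_eq_add, ← two_smul ℝ, norm_smul]; norm_num
  rw [div_lt_iff₀ (by positivity)] at hx
  have hx_far := hlow x (-x)
  rw [hsub] at hx_far
  linarith [hf x]

section AffineModulus

variable {K E ι : Type*} [RCLike K] [NormedAddCommGroup E] [InnerProductSpace K E] [Fintype ι]

/-- The map `M_{A,b}`, with the rows `a_j` of `A` given as vectors of `E`. -/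
noncomputable def affineModulusMap (A : ι → E) (b : ι → K) (x : E) : EuclideanSpace ℝ ι :=
  WithLp.toLp 2 fun j => ‖⟪A j, x⟫_K + b j‖

theorem norm_affineModulusMap_sub_neg_le (A : ι → E) (b : ι → K) (x : E) :
    ‖affineModulusMap A b x - affineModulusMap A b (-x)‖
      ≤ 2 * ‖(WithLp.toLp 2 b : EuclideanSpace K ι)‖ := by
  rw [← abs_two, ← Real.norm_eq_abs, ← norm_smul]
  refine PiLp.norm_le_of_forall_norm_apply_le fun j => ?_
  simpa [affineModulusMap, inner_neg_right, norm_smul]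
    using abs_norm_add_sub_norm_neg_add_le (⟪A j, x⟫_K) (b j)

end AffineModulus

theorem stmt_17 {K : Type*} [RCLike K] (m d : ℕ)
    (A : Fin m → EuclideanSpace K (Fin d)) (b : Fin m → K) (hA : A ≠ 0) :
    ¬ ∃ c > 0, ∀ x y : EuclideanSpace K (Fin d),
        c * ‖x - y‖ ≤
          ‖(show EuclideanSpace ℝ (Fin m) from
              WithLp.toLp 2 (fun j => ‖(inner K (A j) x : K) + b j‖ - ‖(inner K (A j) y : K) + b j‖))‖ := by
  obtain ⟨j, hj⟩ := Function.ne_iff.mp hA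
  have : Nontrivial (EuclideanSpace K (Fin d)) := nontrivial_of_ne _ _ hj
  exact not_exists_lower_lipschitz_of_norm_sub_comp_neg_le
    (norm_affineModulusMap_sub_neg_le A b)
end

section
/- Let A = (a_1,...,a_m)^T ∈ R^{m×d} and b ∈ R^m. Then (A,b) is affine phase retrievable for R^d if and only if for every v ∈ R^d, the vectors {(⟨a_j,v⟩ + b_j) a_j : 1 ≤ j ≤ m} span R^d (equivalently, the Jacobian of the map M²_{A,b} has rank d at every point). -/
/-!
Write two points as `v ± u`. Since `|α + β| = |α - β|` iff `αβ = 0`, we have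
`|⟨a_j, v + u⟩ + b_j| = |⟨a_j, v - u⟩ + b_j|` exactly when `(⟨a_j, v⟩ + b_j) ⟨a_j, u⟩ = 0`, i.e. when
`u` is orthogonal to `(⟨a_j, v⟩ + b_j) a_j`. Hence injectivity fails precisely when, for some midpoint
`v`, a nonzero `u` is orthogonal to all these vectors, i.e. when they do not span.
-/

open scoped InnerProductSpace

theorem Function.injective_iff_forall_add_eq_sub (K : Type*) {E F : Type*} [Field K] [CharZero K]
    [AddCommGroup E] [Module K E] (f : E → F) :
    Function.Injective f ↔ ∀ v u, f (v + u) = f (v - u) → u = 0 := by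
  refine ⟨fun hf v u h => ?_, fun h x y hxy => ?_⟩
  · have h2 : (2 : K) • u = 0 := by linear_combination (norm := module) hf h
    simpa using h2
  · have hu := h ((2 : K)⁻¹ • (x + y)) ((2 : K)⁻¹ • (x - y)) (by convert hxy using 2 <;> module)
    simpa [sub_eq_zero] using hu

theorem span_range_eq_top_iff_forall_inner_eq_zero {𝕜 E ι : Type*} [RCLike 𝕜]
    [NormedAddCommGroup E] [InnerProductSpace 𝕜 E] [FiniteDimensional 𝕜 E] (g : ι → E) :
    Submodule.span 𝕜 (Set.range g) = ⊤ ↔ ∀ u : E, (∀ i, ⟪g i, u⟫_𝕜 = 0) → u = 0 := by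
  rw [← Submodule.orthogonal_eq_bot_iff, Submodule.eq_bot_iff]
  refine forall_congr' fun u => imp_congr_left ?_
  rw [← Submodule.span_singleton_le_iff_mem, ← Submodule.isOrtho_iff_le, Submodule.isOrtho_comm,
    Submodule.isOrtho_span]
  simp

theorem abs_inner_add_eq_abs_inner_sub_iff {E : Type*} [NormedAddCommGroup E]
    [InnerProductSpace ℝ E] (a v u : E) (c : ℝ) :
    |⟪a, v + u⟫_ℝ + c| = |⟪a, v - u⟫_ℝ + c| ↔ (⟪a, v⟫_ℝ + c) * ⟪a, u⟫_ℝ = 0 := by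
  rw [abs_eq_abs, inner_add_right, inner_sub_right, mul_eq_zero]
  constructor
  · rintro (h | h)
    · right; linarith
    · left; linarith
  · rintro (h | h)
    · right; linarith
    · left; linarith

theorem stmt_19 (m d : ℕ) (A : Fin m → EuclideanSpace ℝ (Fin d)) (b : Fin m → ℝ) :
    Function.Injective
      (fun x : EuclideanSpace ℝ (Fin d) => fun j : Fin m => abs ((inner ℝ (A j) (x) : ℝ) + b j)) ↔
    ∀ v : EuclideanSpace ℝ (Fin d),
      Submodule.span ℝ (Set.range (fun j : Fin m => ((inner ℝ (A j) (v) : ℝ) + b j) • A j)) = ⊤ := by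
  simp only [Function.injective_iff_forall_add_eq_sub ℝ, funext_iff,
    abs_inner_add_eq_abs_inner_sub_iff, span_range_eq_top_iff_forall_inner_eq_zero,
    real_inner_smul_left]
end
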